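/- For every natural number n > 2, the Weyl group of the standard dihedral subgroup D_{2n} in SO(3), i.e. the quotient N_{SO(3)}(D_{2n})/D_{2n} of its normaliser by D_{2n}, has order 2. -/

import Mathlib

noncomputable section

/-- `SO(3)`: the special orthogonal group of `3 × 3` real matrices. -/
abbrev SO3 := Matrix.specialOrthogonalGroup (Fin 3) ℝ

noncomputable instance : Group SO3 :=
  { (inferInstance : Monoid SO3) with
    inv := fun A => ⟨star A.1, by
      rw [Matrix.mem_specialOrthogonalGroup_iff]
      refine ⟨Unitary.star_mem A.2.1, ?_⟩
      have h : (A.1).det = 1 := A.2.2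
      rw [Matrix.star_eq_conjTranspose, Matrix.det_conjTranspose, h, star_one]⟩
    inv_mul_cancel := fun A => Subtype.ext A.2.1.1 }

open Real in
/-- The matrix of the rotation by `θ` about the z-axis. -/
def RzMat (θ : ℝ) : Matrix (Fin 3) (Fin 3) ℝ :=
  !![cos θ, -sin θ, 0;
     sin θ,  cos θ, 0;
     0, 0, 1]

lemma RzMat_mem (θ : ℝ) : RzMat θ ∈ Matrix.specialOrthogonalGroup (Fin 3) ℝ := by
  rw [Matrix.mem_specialOrthogonalGroup_iff]
  constructor
  · rw [Matrix.mem_orthogonalGroup_iff]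
    ext i j
    fin_cases i <;> fin_cases j <;>
      simp [RzMat, Matrix.mul_apply, Fin.sum_univ_succ, Matrix.star_eq_conjTranspose,
        Matrix.conjTranspose_apply, Matrix.vecHead, Matrix.vecTail] <;>
      nlinarith [Real.sin_sq_add_cos_sq θ]
  · simp [RzMat, Matrix.det_fin_three]
    nlinarith [Real.sin_sq_add_cos_sq θ]

/-- The rotation by `θ` about the z-axis, as an element of SO(3). -/
def Rz (θ : ℝ) : SO3 := ⟨RzMat θ, RzMat_mem θ⟩

/-- The matrix `diag (1, -1, -1)`. -/
def rhoMat : Matrix (Fin 3) (Fin 3) ℝ := !![1,0,0; 0,-1,0; 0,0,-1]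

lemma rhoMat_mem : rhoMat ∈ Matrix.specialOrthogonalGroup (Fin 3) ℝ := by
  rw [Matrix.mem_specialOrthogonalGroup_iff]
  constructor
  · rw [Matrix.mem_orthogonalGroup_iff]
    ext i j
    fin_cases i <;> fin_cases j <;>
      simp [rhoMat, Matrix.mul_apply, Fin.sum_univ_succ, Matrix.star_eq_conjTranspose,
        Matrix.conjTranspose_apply, Matrix.vecHead, Matrix.vecTail]
  · simp [rhoMat, Matrix.det_fin_three]

/-- `ρ = diag (1, -1, -1)`, the rotation by `π` about the x-axis, as an element of SO(3). -/
def ρ : SO3 := ⟨rhoMat, rhoMat_mem⟩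

lemma Rz_add (a b : ℝ) : Rz a * Rz b = Rz (a + b) := by
  apply Subtype.ext
  show RzMat a * RzMat b = RzMat (a + b)
  ext i j
  fin_cases i <;> fin_cases j <;>
    simp [RzMat, Matrix.mul_apply, Fin.sum_univ_succ, Matrix.vecHead, Matrix.vecTail,
      Real.cos_add, Real.sin_add] <;> ring

lemma Rz_zero : Rz 0 = 1 := by
  apply Subtype.ext
  show RzMat 0 = 1
  ext i j
  fin_cases i <;> fin_cases j <;>
    simp [RzMat, Matrix.one_apply, Matrix.vecHead, Matrix.vecTail]

lemma rho_sq : ρ * ρ = 1 := by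
  apply Subtype.ext
  show rhoMat * rhoMat = 1
  ext i j
  fin_cases i <;> fin_cases j <;>
    simp [rhoMat, Matrix.mul_apply, Fin.sum_univ_succ, Matrix.one_apply,
      Matrix.vecHead, Matrix.vecTail]

lemma Rz_rho (θ : ℝ) : Rz θ * ρ = ρ * Rz (-θ) := by
  apply Subtype.ext
  show RzMat θ * rhoMat = rhoMat * RzMat (-θ)
  ext i j
  fin_cases i <;> fin_cases j <;>
    simp [RzMat, rhoMat, Matrix.mul_apply, Fin.sum_univ_succ,
      Matrix.vecHead, Matrix.vecTail]

lemma Rz_inv (θ : ℝ) : (Rz θ)⁻¹ = Rz (-θ) := by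
  symm
  rw [eq_inv_iff_mul_eq_one, Rz_add]
  simpa using Rz_zero

lemma rho_inv : ρ⁻¹ = ρ := inv_eq_of_mul_eq_one_right rho_sq
/-- The standard dihedral subgroup `D_{2n} ⊆ SO(3)` of order `2n`,
generated by `Rz (2π/n)` and `ρ`. -/
def D2n (n : ℕ) : Subgroup SO3 := Subgroup.closure {Rz (2 * Real.pi / n), ρ}
open Real

lemma rho_Rz (b : ℝ) : ρ * Rz b = Rz (-b) * ρ := by
  simpa using (Rz_rho (-b)).symm

lemma Rz_mul_Rzrho (a b : ℝ) : Rz a * (Rz b * ρ) = Rz (a + b) * ρ := by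
  rw [← mul_assoc, Rz_add]

lemma Rzrho_mul_Rz (a b : ℝ) : (Rz a * ρ) * Rz b = Rz (a - b) * ρ := by
  rw [mul_assoc, rho_Rz, ← mul_assoc, Rz_add]; ring_nf

lemma Rzrho_mul_Rzrho (a b : ℝ) : (Rz a * ρ) * (Rz b * ρ) = Rz (a - b) := by
  rw [← mul_assoc, Rzrho_mul_Rz, mul_assoc, rho_sq, mul_one]

lemma Rzrho_inv (a : ℝ) : (Rz a * ρ)⁻¹ = Rz a * ρ := by
  rw [mul_inv_rev, rho_inv, Rz_inv, rho_Rz, neg_neg]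

lemma Rz_npow (θ : ℝ) (m : ℕ) : Rz θ ^ m = Rz (m * θ) := by
  induction m with
  | zero => simp [Rz_zero.symm]
  | succ k ih => rw [pow_succ, ih, Rz_add]; push_cast; ring_nf

lemma Rz_zpow (θ : ℝ) (k : ℤ) : Rz θ ^ k = Rz (k * θ) := by
  obtain ⟨m, rfl | rfl⟩ := Int.eq_nat_or_neg k
  · rw [zpow_natCast, Rz_npow]; push_cast; ring_nf
  · rw [zpow_neg, zpow_natCast, Rz_npow, Rz_inv]; push_cast; ring_nf
/-- The explicit carrier subgroup: rotations `Rz (2πk/n)` and reflections `Rz (2πk/n) * ρ`. -/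
def Dsub (n : ℕ) : Subgroup SO3 where
  carrier := {g | ∃ k : ℤ, g = Rz (2 * π * k / n) ∨ g = Rz (2 * π * k / n) * ρ}
  one_mem' := ⟨0, Or.inl (by rw [show (2 * π * (0:ℤ) / n : ℝ) = 0 by push_cast; ring, Rz_zero])⟩
  mul_mem' := by
    rintro x y ⟨k, rfl | rfl⟩ ⟨l, rfl | rfl⟩
    · exact ⟨k + l, Or.inl (by rw [Rz_add]; congr 1; push_cast; ring)⟩
    · exact ⟨k + l, Or.inr (by rw [Rz_mul_Rzrho]; congr 2; push_cast; ring)⟩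
    · exact ⟨k - l, Or.inr (by rw [Rzrho_mul_Rz]; congr 2; push_cast; ring)⟩
    · exact ⟨k - l, Or.inl (by rw [Rzrho_mul_Rzrho]; congr 1; push_cast; ring)⟩
  inv_mem' := by
    rintro x ⟨k, rfl | rfl⟩
    · exact ⟨-k, Or.inl (by rw [Rz_inv]; congr 1; push_cast; ring)⟩
    · exact ⟨k, Or.inr (Rzrho_inv _)⟩

lemma D2n_eq (n : ℕ) : D2n n = Dsub n := by
  apply le_antisymm
  · rw [D2n, Subgroup.closure_le]
    rintro x (rfl | rfl)
    · exact ⟨1, Or.inl (by congr 1; push_cast; ring)⟩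
    · exact ⟨0, Or.inr (by rw [show (2 * π * (0:ℤ) / n : ℝ) = 0 by push_cast; ring, Rz_zero, one_mul])⟩
  · rintro g ⟨k, rfl | rfl⟩
    · have h : Rz (2 * π * k / n) = Rz (2 * π / n) ^ k := by
        rw [Rz_zpow]; congr 1; ring
      rw [h]
      exact Subgroup.zpow_mem _ (Subgroup.subset_closure (by simp)) k
    · have h : Rz (2 * π * k / n) = Rz (2 * π / n) ^ k := by
        rw [Rz_zpow]; congr 1; ring
      rw [h]
      exact Subgroup.mul_mem _ (Subgroup.zpow_mem _ (Subgroup.subset_closure (by simp)) k)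
        (Subgroup.subset_closure (by simp))

lemma Rz_coe (θ : ℝ) (i j : Fin 3) : ((Rz θ : SO3) : Matrix (Fin 3) (Fin 3) ℝ) i j = RzMat θ i j := rfl

lemma SO3_coe_mul (x y : SO3) : ((x * y : SO3) : Matrix (Fin 3) (Fin 3) ℝ) = (x : Matrix (Fin 3) (Fin 3) ℝ) * y := rfl

lemma Rz_ne_Rzrho (a b : ℝ) : Rz a ≠ Rz b * ρ := by
  intro h
  have := congrArg (fun g : SO3 => (g : Matrix (Fin 3) (Fin 3) ℝ) 2 2) h
  simp only [SO3_coe_mul] at this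
  simp [Rz, RzMat, ρ, rhoMat, Matrix.mul_apply, Fin.sum_univ_succ] at this
  linarith

lemma Rz_eq_iff (a b : ℝ) : Rz a = Rz b ↔ ∃ m : ℤ, a = b + m * (2 * π) := by
  constructor
  · intro h
    have hc := congrArg (fun g : SO3 => (g : Matrix (Fin 3) (Fin 3) ℝ) 0 0) h
    have hs := congrArg (fun g : SO3 => (g : Matrix (Fin 3) (Fin 3) ℝ) 1 0) h
    simp [Rz, RzMat] at hc hs
    have h1 : Real.cos (a - b) = 1 := by
      rw [Real.cos_sub, hc, hs]
      nlinarith [Real.sin_sq_add_cos_sq b]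
    obtain ⟨m, hm⟩ := (Real.cos_eq_one_iff _).1 h1
    exact ⟨m, by linarith⟩
  · rintro ⟨m, rfl⟩
    apply Subtype.ext
    show RzMat _ = RzMat _
    ext i j
    fin_cases i <;> fin_cases j <;>
      simp [RzMat, Matrix.vecHead, Matrix.vecTail, Real.cos_add_int_mul_two_pi,
        Real.sin_add_int_mul_two_pi]
lemma trace_conj (g h : SO3) :
    Matrix.trace ((g * h * g⁻¹ : SO3) : Matrix (Fin 3) (Fin 3) ℝ) =
      Matrix.trace ((h : SO3) : Matrix (Fin 3) (Fin 3) ℝ) := by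
  have h1 : ((g⁻¹ * g : SO3) : Matrix (Fin 3) (Fin 3) ℝ) = 1 := by
    rw [inv_mul_cancel]; rfl
  rw [SO3_coe_mul, SO3_coe_mul, Matrix.trace_mul_cycle, ← SO3_coe_mul g⁻¹ g, h1, Matrix.one_mul]

lemma trace_Rz (θ : ℝ) : Matrix.trace ((Rz θ : SO3) : Matrix (Fin 3) (Fin 3) ℝ) = 2 * Real.cos θ + 1 := by
  show Matrix.trace (RzMat θ) = _
  simp [RzMat, Matrix.trace_fin_three]
  ring

lemma trace_Rzrho (θ : ℝ) : Matrix.trace ((Rz θ * ρ : SO3) : Matrix (Fin 3) (Fin 3) ℝ) = -1 := by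
  rw [SO3_coe_mul]
  show Matrix.trace (RzMat θ * rhoMat) = _
  simp [RzMat, rhoMat, Matrix.trace_fin_three, Matrix.mul_apply, Fin.sum_univ_succ]

set_option maxHeartbeats 1000000 in
/-- An element of SO(3) whose third column is `e₃` is a rotation about the z-axis. -/
lemma exists_Rz_of_col (g : SO3) (h02 : (g : Matrix (Fin 3) (Fin 3) ℝ) 0 2 = 0)
    (h12 : (g : Matrix (Fin 3) (Fin 3) ℝ) 1 2 = 0)
    (h22 : (g : Matrix (Fin 3) (Fin 3) ℝ) 2 2 = 1) : ∃ θ : ℝ, g = Rz θ := by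
  set M : Matrix (Fin 3) (Fin 3) ℝ := (g : Matrix (Fin 3) (Fin 3) ℝ) with hM
  have hmem := g.2
  rw [Matrix.mem_specialOrthogonalGroup_iff] at hmem
  obtain ⟨ho, hdet⟩ := hmem
  have hMMT : M * M.transpose = 1 := by
    have := (Matrix.mem_orthogonalGroup_iff _ _).1 ho
    simpa [Matrix.star_eq_conjTranspose] using this
  have hMTM : M.transpose * M = 1 := by
    have := (Matrix.mem_orthogonalGroup_iff' _ _).1 ho
    simpa [Matrix.star_eq_conjTranspose] using this
  -- third row is (0,0,1)
  have hrow := congrFun (congrFun hMMT 2) 2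
  simp [Matrix.mul_apply, Fin.sum_univ_succ, Matrix.one_apply, h22] at hrow
  have h20 : M 2 0 = 0 := by nlinarith [sq_nonneg (M 2 0), sq_nonneg (M 2 1)]
  have h21 : M 2 1 = 0 := by nlinarith [sq_nonneg (M 2 0), sq_nonneg (M 2 1)]
  -- column relations
  have hc0 := congrFun (congrFun hMTM 0) 0
  have hc1 := congrFun (congrFun hMTM 1) 1
  have hc01 := congrFun (congrFun hMTM 0) 1
  simp [Matrix.mul_apply, Fin.sum_univ_succ, Matrix.one_apply, Matrix.transpose_apply,
    h20, h21] at hc0 hc1 hc01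
  have hd : M.det = 1 := hdet
  rw [Matrix.det_fin_three] at hd
  rw [h02, h12, h22, h20, h21] at hd
  set a := M 0 0; set b := M 0 1; set c := M 1 0; set d := M 1 1
  have hd' : a * d - b * c = 1 := by linarith [hd]
  have hda : d = a := by linear_combination a*hd' + c*hc01 - d*hc0
  have hbc : b = -c := by linear_combination (-b)*hc0 - c*hd' + a*hc01
  have ha1 : a ^ 2 + c ^ 2 = 1 := by linear_combination hc0
  have haa : -1 ≤ a ∧ a ≤ 1 := by constructor <;> nlinarith [sq_nonneg c, sq_nonneg a, ha1]
  refine ⟨if 0 ≤ c then Real.arccos a else -Real.arccos a, ?_⟩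
  have hcos : Real.cos (if 0 ≤ c then Real.arccos a else -Real.arccos a) = a := by
    split <;> simp [Real.cos_arccos haa.1 haa.2]
  have hsin : Real.sin (if 0 ≤ c then Real.arccos a else -Real.arccos a) = c := by
    rcases le_or_gt 0 c with hc' | hc'
    · rw [if_pos hc', Real.sin_arccos]
      rw [show (1 : ℝ) - a ^ 2 = c ^ 2 by linarith]
      exact Real.sqrt_sq hc'
    · rw [if_neg (not_le.2 hc'), Real.sin_neg, Real.sin_arccos]
      rw [show (1 : ℝ) - a ^ 2 = c ^ 2 by linarith, show c ^ 2 = (-c) ^ 2 by ring]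
      rw [Real.sqrt_sq (by linarith)]
      ring
  apply Subtype.ext
  show M = RzMat _
  ext i j
  fin_cases i <;> fin_cases j <;>
    simp only [RzMat, Matrix.cons_val', Matrix.cons_val_zero, Matrix.cons_val_one,
      Matrix.head_cons, Matrix.empty_val', Matrix.cons_val_fin_one, Matrix.head_fin_const,
      Matrix.cons_val_two, Matrix.tail_cons, Fin.isValue, hcos, hsin] <;>
    first
      | rfl
      | exact h02
      | exact h12
      | exact h20
      | exact h21
      | exact h22
      | exact hda
      | exact hbc
lemma conj_mem (n : ℕ) (hn : (n:ℝ) ≠ 0) :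
    ∀ g ∈ Dsub (2*n), ∀ h ∈ Dsub n, g * h * g⁻¹ ∈ Dsub n := by
  have hcast : (((2*n : ℕ)):ℝ) = 2*(n:ℝ) := by push_cast; ring
  rintro g ⟨j, rfl | rfl⟩ h ⟨k, rfl | rfl⟩
  · refine ⟨k, Or.inl ?_⟩
    rw [Rz_inv, Rz_add, Rz_add]
    congr 1; ring
  · refine ⟨j + k, Or.inr ?_⟩
    rw [Rz_inv, Rz_mul_Rzrho, Rzrho_mul_Rz]
    congr 2
    rw [hcast]; push_cast; field_simp; ring
  · refine ⟨-k, Or.inl ?_⟩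
    rw [Rzrho_inv, Rzrho_mul_Rz, Rzrho_mul_Rzrho]
    congr 1
    push_cast; ring
  · refine ⟨j - k, Or.inr ?_⟩
    rw [Rzrho_inv, Rzrho_mul_Rzrho, Rz_mul_Rzrho]
    congr 2
    rw [hcast]; push_cast; field_simp; ring

lemma Dsub_le_normalizer (n : ℕ) (hn : (n:ℝ) ≠ 0) : Dsub (2*n) ≤ Subgroup.normalizer (D2n n : Set SO3) := by
  intro g hg
  rw [Subgroup.mem_normalizer_iff]
  intro h
  rw [D2n_eq]
  constructor
  · intro hh
    exact conj_mem n hn g hg h hh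
  · intro hh
    have h2 := conj_mem n hn g⁻¹ (inv_mem hg) _ hh
    have e : h = g⁻¹ * (g * h * g⁻¹) * g⁻¹⁻¹ := by group
    rw [e]; exact h2

lemma normalizer_le (n : ℕ) (hn : 2 < n) : Subgroup.normalizer (D2n n : Set SO3) ≤ Dsub (2*n) := by
  have hπ := Real.pi_pos
  have hnpos : (0:ℝ) < n := by exact_mod_cast (by omega : 0 < n)
  have hn0 : (n:ℝ) ≠ 0 := ne_of_gt hnpos
  have hcast : (((2*n : ℕ)):ℝ) = 2*(n:ℝ) := by push_cast; ring
  set α : ℝ := 2*Real.pi/n with hα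
  have hα1 : 0 < α := by positivity
  have hα2 : α < Real.pi := by
    rw [hα, div_lt_iff₀ hnpos]
    have : (2:ℝ) < n := by exact_mod_cast hn
    nlinarith
  intro g hg
  rw [Subgroup.mem_normalizer_iff] at hg
  have hmem : g * Rz α * g⁻¹ ∈ Dsub n := by
    rw [← D2n_eq]
    exact (hg _).1 (Subgroup.subset_closure (Set.mem_insert _ _))
  obtain ⟨k, hk | hk⟩ := hmem
  swap
  · exfalso
    have t1 := trace_conj g (Rz α)
    rw [hk, trace_Rzrho, trace_Rz] at t1
    have hc := Real.cos_lt_cos_of_nonneg_of_le_pi (le_of_lt hα1) le_rfl hα2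
    rw [Real.cos_pi] at hc
    linarith
  · set β : ℝ := 2*Real.pi*k/n with hβ
    have t1 := trace_conj g (Rz α)
    rw [hk, trace_Rz, trace_Rz] at t1
    have hco : Real.cos β = Real.cos α := by linarith
    have hca : Real.cos α < 1 := by
      have := Real.cos_lt_cos_of_nonneg_of_le_pi le_rfl (le_of_lt hα2) hα1
      rwa [Real.cos_zero] at this
    have hcb : Real.cos β < 1 := by rw [hco]; exact hca
    have hmat : (g : Matrix (Fin 3) (Fin 3) ℝ) * RzMat α =
        RzMat β * (g : Matrix (Fin 3) (Fin 3) ℝ) := by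
      have h' : g * Rz α = Rz β * g := by
        rw [← hk]; group
      have := congrArg (fun x : SO3 => (x : Matrix (Fin 3) (Fin 3) ℝ)) h'
      exact this
    set M : Matrix (Fin 3) (Fin 3) ℝ := (g : Matrix (Fin 3) (Fin 3) ℝ) with hMdef
    have e0 := congrFun (congrFun hmat 0) 2
    have e1 := congrFun (congrFun hmat 1) 2
    simp [Matrix.mul_apply, Fin.sum_univ_succ, RzMat, Matrix.vecHead, Matrix.vecTail] at e0 e1
    have hsc := Real.sin_sq_add_cos_sq β
    have h12 : M 1 2 = 0 := by
      have key : M 1 2 * (2 - 2*Real.cos β) = 0 := by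
        linear_combination Real.sin β * e0 + (1 - Real.cos β) * e1 - M 1 2 * hsc
      have : (2 - 2*Real.cos β) ≠ 0 := by intro h; apply absurd hcb; simp; linarith
      exact (mul_eq_zero.1 key).resolve_right this
    have h02 : M 0 2 = 0 := by
      have key : M 0 2 * (2 - 2*Real.cos β) = 0 := by
        linear_combination 2 * e0 - 2 * Real.sin β * h12
      have : (2 - 2*Real.cos β) ≠ 0 := by intro h; apply absurd hcb; simp; linarith
      exact (mul_eq_zero.1 key).resolve_right this
    -- the (2,2) entry is ±1
    have hmemg := g.2
    rw [Matrix.mem_specialOrthogonalGroup_iff] at hmemg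
    have hMTM : M.transpose * M = 1 := by
      have := (Matrix.mem_orthogonalGroup_iff' _ _).1 hmemg.1
      simpa [Matrix.star_eq_conjTranspose] using this
    have hcol := congrFun (congrFun hMTM 2) 2
    simp [Matrix.mul_apply, Fin.sum_univ_succ, Matrix.one_apply, Matrix.transpose_apply,
      h02, h12] at hcol
    have h22 : M 2 2 = 1 ∨ M 2 2 = -1 := mul_self_eq_one_iff.1 hcol
    -- second condition: conjugate of ρ
    have hrmem : g * ρ * g⁻¹ ∈ Dsub n := by
      rw [← D2n_eq]
      exact (hg _).1 (Subgroup.subset_closure (by simp [D2n]))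
    rcases h22 with h22 | h22
    · obtain ⟨θ, rfl⟩ := exists_Rz_of_col g h02 h12 h22
      have hconj : Rz θ * ρ * (Rz θ)⁻¹ = Rz (2*θ) * ρ := by
        rw [Rz_inv, Rzrho_mul_Rz]; congr 1; ring
      rw [hconj] at hrmem
      obtain ⟨k', hk' | hk'⟩ := hrmem
      · exact absurd hk'.symm (Rz_ne_Rzrho _ _)
      · have h2θ : Rz (2*θ) = Rz (2*Real.pi*k'/n) := mul_right_cancel hk'
        obtain ⟨m, hm⟩ := (Rz_eq_iff _ _).1 h2θ
        refine ⟨k' + m*n, Or.inl ?_⟩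
        congr 1
        rw [hcast]; push_cast
        field_simp
        field_simp at hm
        linarith
    · have hc0 : ((g * ρ : SO3) : Matrix (Fin 3) (Fin 3) ℝ) 0 2 = 0 := by
        rw [SO3_coe_mul]
        show (M * rhoMat) 0 2 = 0
        simp [rhoMat, Matrix.mul_apply, Fin.sum_univ_succ, h02]
      have hc1 : ((g * ρ : SO3) : Matrix (Fin 3) (Fin 3) ℝ) 1 2 = 0 := by
        rw [SO3_coe_mul]
        show (M * rhoMat) 1 2 = 0
        simp [rhoMat, Matrix.mul_apply, Fin.sum_univ_succ, h12]
      have hc2 : ((g * ρ : SO3) : Matrix (Fin 3) (Fin 3) ℝ) 2 2 = 1 := by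
        rw [SO3_coe_mul]
        show (M * rhoMat) 2 2 = 1
        simp [rhoMat, Matrix.mul_apply, Fin.sum_univ_succ, h22]
      obtain ⟨θ, hθ⟩ := exists_Rz_of_col (g * ρ) hc0 hc1 hc2
      have hgθ : g = Rz θ * ρ := by
        have : g * ρ * ρ = Rz θ * ρ := by rw [hθ]
        rwa [mul_assoc, rho_sq, mul_one] at this
      subst hgθ
      have hconj : (Rz θ * ρ) * ρ * (Rz θ * ρ)⁻¹ = Rz (2*θ) * ρ := by
        rw [Rzrho_inv, mul_assoc (Rz θ) ρ ρ, rho_sq, mul_one, Rz_mul_Rzrho]; congr 1; ring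
      rw [hconj] at hrmem
      obtain ⟨k', hk' | hk'⟩ := hrmem
      · exact absurd hk'.symm (Rz_ne_Rzrho _ _)
      · have h2θ : Rz (2*θ) = Rz (2*Real.pi*k'/n) := mul_right_cancel hk'
        obtain ⟨m, hm⟩ := (Rz_eq_iff _ _).1 h2θ
        refine ⟨k' + m*n, Or.inr ?_⟩
        congr 2
        rw [hcast]; push_cast
        field_simp
        field_simp at hm
        linarith

lemma normalizer_eq (n : ℕ) (hn : 2 < n) : Subgroup.normalizer (D2n n : Set SO3) = Dsub (2*n) := by
  have hn0 : (n:ℝ) ≠ 0 := by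
    have : (0:ℝ) < n := by exact_mod_cast (by omega : 0 < n)
    exact ne_of_gt this
  exact le_antisymm (normalizer_le n hn) (Dsub_le_normalizer n hn0)
lemma two_pi_ne : (2*Real.pi) ≠ 0 := by positivity

lemma angle_halve {n : ℕ} (hn : (n:ℝ) ≠ 0) (j k m : ℤ)
    (hm : 2*Real.pi*(j:ℝ)/(((2*n : ℕ)):ℝ) = 2*Real.pi*(k:ℝ)/(n:ℝ) + (m:ℝ)*(2*Real.pi)) :
    j = 2*k + 2*m*n := by
  have hcast : (((2*n : ℕ)):ℝ) = 2*(n:ℝ) := by push_cast; ring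
  rw [hcast] at hm
  have h2 : (2*Real.pi*(n:ℝ)) * (j:ℝ) = (2*Real.pi*(n:ℝ)) * ((2*k+2*m*n : ℤ):ℝ) := by
    field_simp at hm
    push_cast
    linear_combination (2*Real.pi*(n:ℝ)) * hm
  have := mul_left_cancel₀ (mul_ne_zero two_pi_ne hn) h2
  exact_mod_cast this

lemma mem_Dsub_parity (n : ℕ) (hn : (n:ℝ) ≠ 0) (j : ℤ) :
    (Rz (2*Real.pi*(j:ℝ)/(((2*n : ℕ)):ℝ)) ∈ Dsub n ↔ Even j) ∧
    (Rz (2*Real.pi*(j:ℝ)/(((2*n : ℕ)):ℝ)) * ρ ∈ Dsub n ↔ Even j) := by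
  have hcast : (((2*n : ℕ)):ℝ) = 2*(n:ℝ) := by push_cast; ring
  constructor
  · constructor
    · rintro ⟨k, hb | hb⟩
      · obtain ⟨m, hm⟩ := (Rz_eq_iff _ _).1 hb
        have := angle_halve hn j k m hm
        exact ⟨k + m*n, by rw [this]; ring⟩
      · exact absurd hb (Rz_ne_Rzrho _ _)
    · rintro ⟨r, rfl⟩
      refine ⟨r, Or.inl ?_⟩
      congr 1
      rw [hcast]; push_cast; field_simp; ring
  · constructor
    · rintro ⟨k, hb | hb⟩
      · exact absurd hb.symm (Rz_ne_Rzrho _ _)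
      · have hb' : Rz (2*Real.pi*(j:ℝ)/(((2*n : ℕ)):ℝ)) = Rz (2*Real.pi*(k:ℝ)/(n:ℝ)) :=
          mul_right_cancel hb
        obtain ⟨m, hm⟩ := (Rz_eq_iff _ _).1 hb'
        have := angle_halve hn j k m hm
        exact ⟨k + m*n, by rw [this]; ring⟩
    · rintro ⟨r, rfl⟩
      refine ⟨r, Or.inr ?_⟩
      congr 2
      rw [hcast]; push_cast; field_simp; ring

/-- For every `n > 2`, the Weyl group `N_{SO(3)}(D_{2n}) / D_{2n}` of the standard
dihedral subgroup `D_{2n}` in `SO(3)` has order 2. -/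
theorem weyl_group_D2n_order_two (n : ℕ) (hn : 2 < n) :
    Nat.card (Subgroup.normalizer (D2n n : Set SO3) ⧸ (D2n n).subgroupOf (Subgroup.normalizer (D2n n : Set SO3))) = 2 := by
  have hn0 : (n:ℝ) ≠ 0 := by
    have : (0:ℝ) < n := by exact_mod_cast (by omega : 0 < n)
    exact ne_of_gt this
  rw [normalizer_eq n hn, ← Subgroup.index_eq_card, Subgroup.index_eq_two_iff]
  refine ⟨⟨Rz (2*Real.pi*((1:ℤ):ℝ)/(((2*n : ℕ)):ℝ)), ⟨1, Or.inl rfl⟩⟩, ?_⟩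
  intro b
  obtain ⟨j, hb | hb⟩ := b.2
  · have hba : ((b * ⟨Rz (2*Real.pi*((1:ℤ):ℝ)/(((2*n : ℕ)):ℝ)), ⟨1, Or.inl rfl⟩⟩ :
        Dsub (2*n)) : SO3) = Rz (2*Real.pi*((j+1 : ℤ):ℝ)/(((2*n : ℕ)):ℝ)) := by
      show (b : SO3) * Rz _ = _
      rw [hb, Rz_add]
      congr 1
      push_cast; ring
    simp only [Subgroup.mem_subgroupOf, hba, hb, D2n_eq]
    rcases Int.even_or_odd j with h | h
    · refine Or.inr ⟨(mem_Dsub_parity n hn0 j).1.2 h, ?_⟩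
      rw [(mem_Dsub_parity n hn0 (j+1)).1]
      simpa [Int.even_add_one] using h
    · refine Or.inl ⟨?_, ?_⟩
      · rw [(mem_Dsub_parity n hn0 (j+1)).1, Int.even_add_one]
        simpa using h
      · rw [(mem_Dsub_parity n hn0 j).1]
        simpa using h
  · have hba : ((b * ⟨Rz (2*Real.pi*((1:ℤ):ℝ)/(((2*n : ℕ)):ℝ)), ⟨1, Or.inl rfl⟩⟩ :
        Dsub (2*n)) : SO3) = Rz (2*Real.pi*((j-1 : ℤ):ℝ)/(((2*n : ℕ)):ℝ)) * ρ := by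
      show (b : SO3) * Rz _ = _
      rw [hb, Rzrho_mul_Rz]
      congr 2
      push_cast; ring
    simp only [Subgroup.mem_subgroupOf, hba, hb, D2n_eq]
    rcases Int.even_or_odd j with h | h
    · refine Or.inr ⟨(mem_Dsub_parity n hn0 j).2.2 h, ?_⟩
      rw [(mem_Dsub_parity n hn0 (j-1)).2]
      simpa [Int.even_sub_one] using h
    · refine Or.inl ⟨?_, ?_⟩
      · rw [(mem_Dsub_parity n hn0 (j-1)).2, Int.even_sub_one]
        simpa using h
      · rw [(mem_Dsub_parity n hn0 j).2]
        simpa using h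

end
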